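/- arXiv:1802.06384 — 2 statements merged into one kernel-verified Lean document; each statement's English description precedes it below -/
import Mathlib

section
/- Let X, Y be square-integrable random vectors in ℝⁿ, ℝᵐ with Σ_X invertible, and let W ∈ ℝ^{p×n}. Set q(W) = Σ_{YX} Wᵀ (W Σ_X Wᵀ)^†. Then q(W) minimizes U ↦ E‖U W X − Y‖² over U ∈ ℝ^{m×p}, and the minimum value equals tr(Σ_Y) − tr((WK)^† (WK) M), where K = Σ_X^{1/2} and M = K^{-1} Σ_{XY} Σ_{YX} K^{-1}. -/
open Matrix MeasureTheory

/-!
Expanding the square, `E‖AX − Y‖² = tr(A Σ_X Aᵀ) − 2 tr(Σ_{YX} Aᵀ) + tr Σ_Y`. Writing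
`Σ_X = K Kᵀ` and `Σ_{YX} = C Kᵀ` with `C = Σ_{YX} K⁻¹`, completing the square turns the
objective at `A = U W` into `‖U (W K) − C‖²_F + tr(Σ_Y − C Cᵀ)`, a least-squares problem in `U`
whose minimiser is `C (WK)†`; and `q(W) = C (WK)†` because `(W Σ_X Wᵀ)† = (WK)†ᵀ (WK)†`.
-/

/-- `B` is the Moore–Penrose pseudoinverse of `A` (the four Penrose conditions). -/
def IsMoorePenrose {m n : ℕ} (A : Matrix (Fin m) (Fin n) ℝ)
    (B : Matrix (Fin n) (Fin m) ℝ) : Prop :=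
  A * B * A = A ∧ B * A * B = B ∧ (A * B)ᵀ = A * B ∧ (B * A)ᵀ = B * A

lemma Matrix.trace_mul_transpose_self_nonneg {ι κ : Type*} [Fintype ι] [Fintype κ]
    (A : Matrix ι κ ℝ) : 0 ≤ (A * Aᵀ).trace := by
  simpa using (posSemidef_self_mul_conjTranspose A).trace_nonneg

lemma Matrix.trace_complete_square {ι α β : Type*} [Fintype ι] [Fintype α] [Fintype β]
    (A : Matrix ι α ℝ) (K : Matrix α β ℝ) (C : Matrix ι β ℝ) (S : Matrix ι ι ℝ) :
    (A * (K * Kᵀ) * Aᵀ).trace - 2 * (C * Kᵀ * Aᵀ).trace + S.trace =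
      ((A * K - C) * (A * K - C)ᵀ).trace + (S - C * Cᵀ).trace := by
  have hcross : (A * K * Cᵀ).trace = (C * Kᵀ * Aᵀ).trace := by
    rw [← trace_transpose, transpose_mul, transpose_mul, transpose_transpose, Matrix.mul_assoc]
  simp only [transpose_sub, Matrix.sub_mul, Matrix.mul_sub, trace_sub, transpose_mul,
    Matrix.mul_assoc] at hcross ⊢
  linarith

namespace IsMoorePenrose

variable {a b c : ℕ} {A : Matrix (Fin a) (Fin b) ℝ} {G : Matrix (Fin b) (Fin a) ℝ}

lemma transpose_mul_transpose_pinv (hG : IsMoorePenrose A G) : Aᵀ * Gᵀ = G * A := by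
  rw [← transpose_mul, hG.2.2.2]

lemma transpose_pinv_mul_transpose (hG : IsMoorePenrose A G) : Gᵀ * Aᵀ = A * G := by
  rw [← transpose_mul, hG.2.2.1]

lemma transpose_mul_transpose_pinv_mul_transpose (hG : IsMoorePenrose A G) :
    Aᵀ * Gᵀ * Aᵀ = Aᵀ := by
  rw [← transpose_mul, ← transpose_mul, ← Matrix.mul_assoc, hG.1]

lemma unique {C : Matrix (Fin b) (Fin a) ℝ} (hG : IsMoorePenrose A G)
    (hC : IsMoorePenrose A C) : G = C := by
  have hAG : A * G = A * C :=
    calc A * G = Gᵀ * (Aᵀ * Cᵀ * Aᵀ) := by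
          rw [hC.transpose_mul_transpose_pinv_mul_transpose, hG.transpose_pinv_mul_transpose]
      _ = (Gᵀ * Aᵀ) * (Cᵀ * Aᵀ) := by simp only [Matrix.mul_assoc]
      _ = A * C := by
          rw [hG.transpose_pinv_mul_transpose, hC.transpose_pinv_mul_transpose,
            ← Matrix.mul_assoc, hG.1]
  have hGA : G * A = C * A :=
    calc G * A = (Aᵀ * Cᵀ * Aᵀ) * Gᵀ := by
          rw [hC.transpose_mul_transpose_pinv_mul_transpose, hG.transpose_mul_transpose_pinv]
      _ = (Aᵀ * Cᵀ) * (Aᵀ * Gᵀ) := by simp only [Matrix.mul_assoc]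
      _ = C * A := by
          rw [hC.transpose_mul_transpose_pinv, hG.transpose_mul_transpose_pinv, Matrix.mul_assoc,
            ← Matrix.mul_assoc A, hG.1]
  calc G = G * A * G := hG.2.1.symm
    _ = C * A * C := by rw [hGA, Matrix.mul_assoc, hAG, ← Matrix.mul_assoc]
    _ = C := hC.2.1

lemma transpose_mul_transpose_pinv_mul_pinv (hG : IsMoorePenrose A G) : Aᵀ * (Gᵀ * G) = G := by
  rw [← Matrix.mul_assoc, hG.transpose_mul_transpose_pinv, hG.2.1]

lemma mul_transpose_self (hG : IsMoorePenrose A G) : IsMoorePenrose (A * Aᵀ) (Gᵀ * G) := by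
  have hAAG : A * Aᵀ * (Gᵀ * G) = A * G := by
    rw [Matrix.mul_assoc, hG.transpose_mul_transpose_pinv_mul_pinv]
  have hGGA : Gᵀ * G * (A * Aᵀ) = A * G := by
    calc Gᵀ * G * (A * Aᵀ) = Gᵀ * (G * A * Aᵀ) := by simp only [Matrix.mul_assoc]
      _ = (Gᵀ * Aᵀ) * (Gᵀ * Aᵀ) := by
          rw [← hG.transpose_mul_transpose_pinv]; simp only [Matrix.mul_assoc]
      _ = A * G := by rw [hG.transpose_pinv_mul_transpose, ← Matrix.mul_assoc, hG.1]
  refine ⟨?_, ?_, ?_, ?_⟩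
  · rw [hAAG, ← Matrix.mul_assoc, hG.1]
  · rw [Matrix.mul_assoc, hAAG, Matrix.mul_assoc, ← Matrix.mul_assoc G, hG.2.1]
  · rw [hAAG, hG.2.2.1]
  · rw [hGGA, hG.2.2.1]

lemma trace_sub_mul_transpose_sub (hG : IsMoorePenrose A G) (U : Matrix (Fin c) (Fin a) ℝ)
    (C : Matrix (Fin c) (Fin b) ℝ) :
    ((U * A - C) * (U * A - C)ᵀ).trace =
      ((U * A - C * G * A) * (U * A - C * G * A)ᵀ).trace +
        ((C * G * A - C) * (C * G * A - C)ᵀ).trace := by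
  have hcross : (U * A - C * G * A) * (C * G * A - C)ᵀ = 0 := by
    have : A * (C * G * A - C)ᵀ = 0 := by
      rw [Matrix.mul_assoc C G A, transpose_sub, transpose_mul, hG.2.2.2, Matrix.mul_sub,
        ← Matrix.mul_assoc, ← Matrix.mul_assoc, hG.1, sub_self]
    rw [← Matrix.sub_mul, Matrix.mul_assoc, this, Matrix.mul_zero]
  have hcross' : (C * G * A - C) * (U * A - C * G * A)ᵀ = 0 := by
    rw [← transpose_transpose (C * G * A - C), ← transpose_mul, hcross, transpose_zero]
  have hsplit : U * A - C = (U * A - C * G * A) + (C * G * A - C) := by abel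
  rw [hsplit, transpose_add, Matrix.add_mul, Matrix.mul_add, Matrix.mul_add, hcross, hcross']
  simp only [trace_add, add_zero, zero_add]

lemma trace_sub_mul_transpose_sub_le (hG : IsMoorePenrose A G) (U : Matrix (Fin c) (Fin a) ℝ)
    (C : Matrix (Fin c) (Fin b) ℝ) :
    ((C * G * A - C) * (C * G * A - C)ᵀ).trace ≤ ((U * A - C) * (U * A - C)ᵀ).trace := by
  rw [hG.trace_sub_mul_transpose_sub U C]
  linarith [trace_mul_transpose_self_nonneg (U * A - C * G * A)]

lemma trace_pinv_mul_sub_mul_transpose (hG : IsMoorePenrose A G) (C : Matrix (Fin c) (Fin b) ℝ) :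
    ((C * G * A - C) * (C * G * A - C)ᵀ).trace =
      (C * Cᵀ).trace - (G * A * (Cᵀ * C)).trace := by
  have hP : (G * A - 1) * (G * A - 1)ᵀ = 1 - G * A := by
    have hidem : G * A * (G * A) = G * A := by rw [← Matrix.mul_assoc, hG.2.1]
    rw [transpose_sub, hG.2.2.2, transpose_one, Matrix.sub_mul, Matrix.mul_sub, Matrix.mul_sub,
      hidem]
    simp only [Matrix.mul_one, Matrix.one_mul]
    abel
  have hF : C * G * A - C = C * (G * A - 1) := by
    rw [Matrix.mul_sub, Matrix.mul_one, Matrix.mul_assoc]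
  rw [hF, transpose_mul, Matrix.mul_assoc, ← Matrix.mul_assoc (G * A - 1), hP, Matrix.sub_mul,
    Matrix.one_mul, Matrix.mul_sub, trace_sub, trace_mul_comm C (G * A * Cᵀ),
    Matrix.mul_assoc (G * A)]

end IsMoorePenrose

section Moments

variable {Ω : Type*} [MeasurableSpace Ω] {μ : Measure Ω} {α β ι κ : Type*}

noncomputable def crossMoment (μ : Measure Ω) (X : Ω → α → ℝ) (Y : Ω → β → ℝ) :
    Matrix α β ℝ :=
  Matrix.of fun i j => ∫ ω, X ω i * Y ω j ∂μ

lemma MeasureTheory.MemLp.mulVec [Fintype α] [Fintype ι] {p : ENNReal} {X : Ω → α → ℝ}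
    (hX : MemLp X p μ) (A : Matrix ι α ℝ) : MemLp (fun ω => A *ᵥ X ω) p μ :=
  memLp_pi_iff.2 fun i => memLp_finsetSum _ fun j _ => (hX.eval j).const_mul (A i j)

lemma integral_mulVec_mul_mulVec [Fintype α] [Fintype β] {X : Ω → α → ℝ} {Y : Ω → β → ℝ}
    (hX : MemLp X 2 μ) (hY : MemLp Y 2 μ) (A : Matrix ι α ℝ) (B : Matrix κ β ℝ)
    (i : ι) (k : κ) :
    ∫ ω, (A *ᵥ X ω) i * (B *ᵥ Y ω) k ∂μ = (A * crossMoment μ X Y * Bᵀ) i k := by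
  have hint : ∀ j l, Integrable (fun ω => X ω j * Y ω l) μ := fun j l =>
    (hX.eval j).integrable_mul (hY.eval l)
  have hpt : ∀ ω,
      (A *ᵥ X ω) i * (B *ᵥ Y ω) k = ∑ j, ∑ l, A i j * B k l * (X ω j * Y ω l) := by
    intro ω
    simp only [mulVec, dotProduct, Finset.sum_mul_sum]
    exact Finset.sum_congr rfl fun j _ => Finset.sum_congr rfl fun l _ => by ring
  simp only [hpt]
  rw [integral_finsetSum _ fun j _ => integrable_finsetSum _ fun l _ => (hint j l).const_mul _]
  simp only [integral_finsetSum _ fun l _ => (hint _ l).const_mul _, integral_const_mul,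
    Matrix.mul_apply, crossMoment, Matrix.of_apply, transpose_apply, Finset.sum_mul]
  rw [Finset.sum_comm]
  exact Finset.sum_congr rfl fun j _ => Finset.sum_congr rfl fun l _ => by ring

lemma integral_sub_sq {f g : Ω → ℝ} (hf : MemLp f 2 μ) (hg : MemLp g 2 μ) :
    ∫ ω, (f ω - g ω) ^ 2 ∂μ =
      ∫ ω, f ω * f ω ∂μ - 2 * ∫ ω, g ω * f ω ∂μ + ∫ ω, g ω * g ω ∂μ := by
  have hff : Integrable (fun ω => f ω * f ω) μ := hf.integrable_mul hf
  have hgf : Integrable (fun ω => 2 * (g ω * f ω)) μ := (hg.integrable_mul hf).const_mul 2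
  have hgg : Integrable (fun ω => g ω * g ω) μ := hg.integrable_mul hg
  have hpt : ∀ ω, (f ω - g ω) ^ 2 = f ω * f ω - 2 * (g ω * f ω) + g ω * g ω := fun ω => by ring
  simp only [hpt]
  have hffgf : Integrable (fun ω => f ω * f ω - 2 * (g ω * f ω)) μ := hff.sub hgf
  rw [integral_add hffgf hgg, integral_sub hff hgf, integral_const_mul]

lemma integral_sum_sq_mulVec_sub [Fintype α] [Fintype ι] {X : Ω → α → ℝ} {Y : Ω → ι → ℝ}
    (hX : MemLp X 2 μ) (hY : MemLp Y 2 μ) (A : Matrix ι α ℝ) :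
    ∫ ω, ∑ i, ((A *ᵥ X ω) i - Y ω i) ^ 2 ∂μ =
      (A * crossMoment μ X X * Aᵀ).trace - 2 * (crossMoment μ Y X * Aᵀ).trace +
        (crossMoment μ Y Y).trace := by
  classical
  have hAX := hX.mulVec A
  have hsq : ∀ i, Integrable (fun ω => ((A *ᵥ X ω) i - Y ω i) ^ 2) μ := fun i =>
    ((hAX.eval i).sub (hY.eval i)).integrable_sq
  rw [integral_finsetSum _ fun i _ => hsq i]
  simp only [trace, diag, Finset.mul_sum, ← Finset.sum_sub_distrib, ← Finset.sum_add_distrib]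
  refine Finset.sum_congr rfl fun i _ => ?_
  have hYX := integral_mulVec_mul_mulVec hY hX 1 A i i
  have hYY := integral_mulVec_mul_mulVec hY hY 1 1 i i
  simp only [one_mulVec, Matrix.one_mul, transpose_one, Matrix.mul_one] at hYX hYY
  rw [integral_sub_sq (hAX.eval i) (hY.eval i), integral_mulVec_mul_mulVec hX hX A A i i, hYX,
    hYY]

end Moments

theorem stmt6_general {Ω : Type*} [MeasurableSpace Ω] (ℙ : Measure Ω)
    (n m p : ℕ) (X : Ω → Fin n → ℝ) (Y : Ω → Fin m → ℝ)
    (hX : MemLp X 2 ℙ) (hY : MemLp Y 2 ℙ)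
    (SX : Matrix (Fin n) (Fin n) ℝ)
    (hSX : SX = Matrix.of fun i j => ∫ ω, X ω i * X ω j ∂ℙ)
    (SY : Matrix (Fin m) (Fin m) ℝ)
    (hSY : SY = Matrix.of fun i j => ∫ ω, Y ω i * Y ω j ∂ℙ)
    (SYX : Matrix (Fin m) (Fin n) ℝ)
    (hSYX : SYX = Matrix.of fun i j => ∫ ω, Y ω i * X ω j ∂ℙ)
    (hinv : IsUnit SX.det)
    (K : Matrix (Fin n) (Fin n) ℝ) (hKpsd : K.PosSemidef) (hKsq : K * K = SX)
    (W : Matrix (Fin p) (Fin n) ℝ)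
    (D : Matrix (Fin p) (Fin p) ℝ) (hD : IsMoorePenrose (W * SX * Wᵀ) D)
    (G : Matrix (Fin n) (Fin p) ℝ) (hG : IsMoorePenrose (W * K) G)
    (qW : Matrix (Fin m) (Fin p) ℝ) (hqW : qW = SYX * Wᵀ * D)
    (M : Matrix (Fin n) (Fin n) ℝ) (hM : M = K⁻¹ * SYXᵀ * SYX * K⁻¹) :
    (∀ U : Matrix (Fin m) (Fin p) ℝ,
        (∫ ω, ∑ i, ((qW * W).mulVec (X ω) i - Y ω i) ^ 2 ∂ℙ)
          ≤ ∫ ω, ∑ i, ((U * W).mulVec (X ω) i - Y ω i) ^ 2 ∂ℙ)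
    ∧ (∫ ω, ∑ i, ((qW * W).mulVec (X ω) i - Y ω i) ^ 2 ∂ℙ)
        = SY.trace - (G * (W * K) * M).trace := by
  change SX = crossMoment ℙ X X at hSX
  change SY = crossMoment ℙ Y Y at hSY
  change SYX = crossMoment ℙ Y X at hSYX
  have hKT : Kᵀ = K := (isHermitian_iff_isSymm.1 hKpsd.isHermitian).eq
  have hKdet : IsUnit K.det := by
    rw [← hKsq, det_mul] at hinv
    exact isUnit_of_mul_isUnit_left hinv
  set C := SYX * K⁻¹ with hC
  have hSXK : SX = K * Kᵀ := by rw [hKT, hKsq]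
  have hSYXC : SYX = C * Kᵀ := by
    rw [hKT, Matrix.mul_assoc, nonsing_inv_mul K hKdet, Matrix.mul_one]
  have hloss : ∀ A : Matrix (Fin m) (Fin n) ℝ, ∫ ω, ∑ i, ((A *ᵥ X ω) i - Y ω i) ^ 2 ∂ℙ =
      ((A * K - C) * (A * K - C)ᵀ).trace + (SY - C * Cᵀ).trace := fun A => by
    rw [integral_sum_sq_mulVec_sub hX hY, ← hSX, ← hSYX, ← hSY, hSXK, hSYXC,
      trace_complete_square]
  have hq : qW * W * K = C * G * (W * K) := by
    have hWSW : W * SX * Wᵀ = W * K * (W * K)ᵀ := by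
      rw [hSXK, transpose_mul]; simp only [Matrix.mul_assoc]
    have hDG : D = Gᵀ * G := hD.unique (hWSW ▸ hG.mul_transpose_self)
    calc qW * W * K = C * ((W * K)ᵀ * (Gᵀ * G)) * (W * K) := by
          rw [hqW, hDG, hSYXC, transpose_mul]; simp only [Matrix.mul_assoc]
      _ = C * G * (W * K) := by rw [hG.transpose_mul_transpose_pinv_mul_pinv]
  have hMC : M = Cᵀ * C := by
    rw [hM, hC, transpose_mul, transpose_nonsing_inv, hKT]; simp only [Matrix.mul_assoc]
  refine ⟨fun U => ?_, ?_⟩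
  · rw [hloss, hloss, hq, Matrix.mul_assoc U]
    exact add_le_add_left (hG.trace_sub_mul_transpose_sub_le U C) _
  · rw [hloss, hq, hG.trace_pinv_mul_sub_mul_transpose, hMC, trace_sub]
    ring

/-- With `Σ_X` invertible, `q(W) = Σ_{YX} Wᵀ (W Σ_X Wᵀ)†` minimizes
`U ↦ E‖UWX − Y‖²`, and the minimum value is
`tr(Σ_Y) − tr((WK)†(WK) M)` with `K = Σ_X^{1/2}` and `M = K⁻¹ Σ_{XY} Σ_{YX} K⁻¹`. -/
theorem stmt6 {Ω : Type*} [MeasurableSpace Ω] (ℙ : Measure Ω) [IsProbabilityMeasure ℙ]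
    (n m p : ℕ) (X : Ω → Fin n → ℝ) (Y : Ω → Fin m → ℝ)
    (hX : MemLp X 2 ℙ) (hY : MemLp Y 2 ℙ)
    (SX : Matrix (Fin n) (Fin n) ℝ)
    (hSX : SX = Matrix.of fun i j => ∫ ω, X ω i * X ω j ∂ℙ)
    (SY : Matrix (Fin m) (Fin m) ℝ)
    (hSY : SY = Matrix.of fun i j => ∫ ω, Y ω i * Y ω j ∂ℙ)
    (SYX : Matrix (Fin m) (Fin n) ℝ)
    (hSYX : SYX = Matrix.of fun i j => ∫ ω, Y ω i * X ω j ∂ℙ)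
    (hinv : IsUnit SX.det)
    (K : Matrix (Fin n) (Fin n) ℝ) (hKpsd : K.PosSemidef) (hKsq : K * K = SX)
    (W : Matrix (Fin p) (Fin n) ℝ)
    (D : Matrix (Fin p) (Fin p) ℝ) (hD : IsMoorePenrose (W * SX * Wᵀ) D)
    (G : Matrix (Fin n) (Fin p) ℝ) (hG : IsMoorePenrose (W * K) G)
    (qW : Matrix (Fin m) (Fin p) ℝ) (hqW : qW = SYX * Wᵀ * D)
    (M : Matrix (Fin n) (Fin n) ℝ) (hM : M = K⁻¹ * SYXᵀ * SYX * K⁻¹) :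
    (∀ U : Matrix (Fin m) (Fin p) ℝ,
        (∫ ω, ∑ i, ((qW * W).mulVec (X ω) i - Y ω i) ^ 2 ∂ℙ)
          ≤ ∫ ω, ∑ i, ((U * W).mulVec (X ω) i - Y ω i) ^ 2 ∂ℙ)
    ∧ (∫ ω, ∑ i, ((qW * W).mulVec (X ω) i - Y ω i) ^ 2 ∂ℙ)
        = SY.trace - (G * (W * K) * M).trace :=
  stmt6_general ℙ n m p X Y hX hY SX hSX SY hSY SYX hSYX hinv K hKpsd hKsq W D hD G hG qW hqW M hM
end

section
/- Let n > 1 and let ρ ∈ L²(ℝ, e^{−x²/2}dx) be continuous and not a polynomial. Then for every p ≥ 1 there exists a function representable by a width-(p+1) one-hidden-layer network with activation ρ that is not representable by any width-p such network; i.e., V_{ρ,p} ⊊ V_{ρ,p+1} for all p, so dim_*(ρ, n) = ∞. -/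
/-!
Take the `p + 1` pairwise non-proportional directions `wᵢ = e₀ + i e₁` and suppose
`∑ᵢ ρ(⟪wᵢ, x⟫)` were a width-`p` network `∑ⱼ vⱼ ρ(⟪w'ⱼ, x⟫)`. Each `w'ⱼ` is proportional to at
most one `wᵢ`, so some `w_{i₀}` is proportional to no other direction of the resulting relation
`∑ₖ fₖ(⟪aₖ, x⟫) = 0`. Shifting `x` by a vector orthogonal to `aₖ` but not to `w_{i₀}` annihilates
the `k`-th ridge function and replaces the profile `ρ` by a finite difference of it; eliminating
the other directions one at a time shows that a finite difference of `ρ` with arbitrary step is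
a polynomial. A continuous function all of whose finite differences are polynomials is itself a
polynomial: subtracting a discrete antiderivative of `Δ₁ρ` leaves a bounded periodic function
whose differences are bounded polynomials, hence constant, so it is a continuous additive
function (up to a constant) vanishing at `1`.
-/

open Polynomial Function Set LinearMap

namespace Polynomial

variable {K : Type*} [Field K] [CharZero K]

theorem eval_map_bernoulli_add_one (n : ℕ) (x : K) :
    ((bernoulli n).map (algebraMap ℚ K)).eval (x + 1) =
      ((bernoulli n).map (algebraMap ℚ K)).eval x + n * x ^ (n - 1) := by
  simpa [eval_map_algebraMap, aeval_comp, add_comm] using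
    congr(aeval x $(bernoulli_comp_one_add_X n))

theorem exists_eval_add_one_sub_eval (P : K[X]) :
    ∃ Q : K[X], ∀ x, Q.eval (x + 1) - Q.eval x = P.eval x := by
  refine ⟨∑ k ∈ P.support, C (P.coeff k / (k + 1)) * (bernoulli (k + 1)).map (algebraMap ℚ K),
    fun x => ?_⟩
  rw [eval_finsetSum, eval_finsetSum, ← Finset.sum_sub_distrib, eval_eq_sum, sum_def]
  refine Finset.sum_congr rfl fun k _ => ?_
  rw [eval_mul, eval_mul, eval_C, eval_C, ← mul_sub, eval_map_bernoulli_add_one]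
  push_cast
  field_simp
  ring

theorem eval_eq_eval_zero_of_abs_le {P : ℝ[X]} {M : ℝ} (hP : ∀ x, |P.eval x| ≤ M) (x : ℝ) :
    P.eval x = P.eval 0 := by
  have hdeg : P.degree ≤ 0 :=
    (isBoundedUnder_abs_atTop_iff P).1 ⟨M, Filter.eventually_map.2 (.of_forall hP)⟩
  rw [eq_C_of_degree_le_zero hdeg, eval_C, eval_C]

end Polynomial

theorem exists_polynomial_of_forall_sub_polynomial {g : ℝ → ℝ} (hg : Continuous g)
    (hΔ : ∀ s, ∃ P : ℝ[X], ∀ x, g (x + s) - g x = P.eval x) :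
    ∃ Q : ℝ[X], ∀ x, g x = Q.eval x := by
  obtain ⟨P, hP⟩ := hΔ 1
  obtain ⟨Q, hQ⟩ := P.exists_eval_add_one_sub_eval
  set r : ℝ → ℝ := fun x => g x - Q.eval x
  have hr : Continuous r := hg.sub Q.continuous
  have hper : Periodic r 1 := fun x => by linarith [hP x, hQ x]
  obtain ⟨M, hM⟩ := (hper.isBounded_of_continuous one_ne_zero hr).exists_norm_le
  have hΔr : ∀ s x, r (x + s) - r x = r s - r 0 := by
    intro s
    obtain ⟨R, hR⟩ := hΔ s
    have hRr : ∀ x, r (x + s) - r x = (R - (Q.comp (X + C s) - Q)).eval x := fun x => by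
      simp only [r, eval_sub, eval_comp, eval_add, eval_X, eval_C, ← hR]
      ring
    have hRM : ∀ x, |(R - (Q.comp (X + C s) - Q)).eval x| ≤ M + M := fun x =>
      hRr x ▸ (abs_sub _ _).trans (add_le_add (hM _ (mem_range_self _)) (hM _ (mem_range_self _)))
    intro x
    rw [hRr, eval_eq_eval_zero_of_abs_le hRM x, ← hRr, zero_add]
  let k : ℝ →+ ℝ := AddMonoidHom.mk' (fun x => r x - r 0) fun x y => by linarith [hΔr y x]
  have hk : Continuous k := hr.sub continuous_const
  have hk1 : k 1 = 0 := sub_eq_zero.2 (by simpa using hper 0)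
  refine ⟨Q + C (r 0), fun x => ?_⟩
  have hrx : r x = r 0 := by simpa [k, hk1, sub_eq_zero] using map_real_smul k hk x 1
  rw [eval_add, eval_C, ← hrx]
  ring

section RidgeFunctions

variable {E ι : Type*} [AddCommGroup E] [Module ℝ E]

theorem exists_polynomial_of_add_sum_ridge_eq_zero {ψ : E →ₗ[ℝ] ℝ} (hψ : ψ ≠ 0)
    {φ : ι → E →ₗ[ℝ] ℝ} {s : Finset ι} (hφ : ∀ i ∈ s, ¬ ker (φ i) ≤ ker ψ)
    {g : ℝ → ℝ} (hg : Continuous g) {f : ι → ℝ → ℝ}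
    (hsum : ∀ x, g (ψ x) + ∑ i ∈ s, f i (φ i x) = 0) :
    ∃ P : ℝ[X], ∀ t, g t = P.eval t := by
  classical
  induction s using Finset.induction_on generalizing g f with
  | empty =>
    refine ⟨0, fun t => ?_⟩
    obtain ⟨x, rfl⟩ := surjective_of_ne_zero hψ t
    simpa using hsum x
  | insert j s hj ih =>
    obtain ⟨v, hv, hψv⟩ := SetLike.not_le_iff_exists.1 (hφ j (Finset.mem_insert_self j s))
    rw [mem_ker] at hv hψv
    refine exists_polynomial_of_forall_sub_polynomial hg fun t => ?_
    set u : E := (t / ψ v) • v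
    have hψu : ψ u = t := by simp [u, hψv]
    have hφu : φ j u = 0 := by simp [u, hv]
    refine ih (fun i hi => hφ i (Finset.mem_insert_of_mem hi))
      ((hg.comp (continuous_add_const t)).sub hg) (f := fun i r => f i (r + φ i u) - f i r)
      fun x => ?_
    have h₁ := hsum (x + u)
    have h₂ := hsum x
    rw [Finset.sum_insert hj] at h₁ h₂
    simp only [map_add, hψu, hφu, add_zero] at h₁
    simp only [Finset.sum_sub_distrib]
    linarith

theorem exists_polynomial_of_sum_ridge_eq_zero [Fintype ι] {φ : ι → E →ₗ[ℝ] ℝ} {f : ι → ℝ → ℝ}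
    (hsum : ∀ x, ∑ i, f i (φ i x) = 0) {i₀ : ι} (hφ₀ : φ i₀ ≠ 0)
    (hφ : ∀ i ≠ i₀, ¬ ker (φ i) ≤ ker (φ i₀)) (hf : Continuous (f i₀)) :
    ∃ P : ℝ[X], ∀ t, f i₀ t = P.eval t := by
  classical
  exact exists_polynomial_of_add_sum_ridge_eq_zero hφ₀ (s := Finset.univ.erase i₀)
    (fun i hi => hφ i (Finset.ne_of_mem_erase hi)) hf (f := f) fun x =>
      (Finset.add_sum_erase _ (fun i => f i (φ i x)) (Finset.mem_univ i₀)).trans (hsum x)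

end RidgeFunctions

section Kernels

variable {K E : Type*} [Field K] [AddCommGroup E] [Module K E]

theorem LinearMap.exists_eq_smul_of_ker_le {φ ψ : E →ₗ[K] K} (h : ker φ ≤ ker ψ) :
    ∃ c : K, ψ = c • φ := by
  have := mem_span_of_iInf_ker_le_ker (L := fun _ : Unit => φ) (K := ψ) (iInf_const.trans_le h)
  rw [range_const, Submodule.mem_span_singleton] at this
  obtain ⟨c, hc⟩ := this
  exact ⟨c, hc.symm⟩

theorem exists_forall_not_ker_le {ι κ : Type*} [Fintype ι] [Fintype κ]
    (hcard : Fintype.card κ < Fintype.card ι) {ψ : ι → E →ₗ[K] K}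
    (hψ : Pairwise fun i k => ¬ ker (ψ i) ≤ ker (ψ k)) (φ : κ → E →ₗ[K] K) :
    ∃ i, ∀ j, ¬ ker (φ j) ≤ ker (ψ i) := by
  by_contra! h
  choose F hF using h
  obtain ⟨i, k, hik, hFik⟩ := Fintype.exists_ne_map_eq_of_card_lt F hcard
  obtain ⟨c, hc⟩ := exists_eq_smul_of_ker_le (hF k)
  have hc0 : c ≠ 0 := by
    rintro rfl
    exact hψ hik (by simp [hc])
  apply hψ hik.symm
  rw [hc, ker_smul _ _ hc0, ← hFik]
  exact hF i

end Kernels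

theorem pairwise_not_ker_dotProduct_single_add_le {m : Type*} [Fintype m] [DecidableEq m]
    {j₀ j₁ : m} (hj : j₀ ≠ j₁) :
    Pairwise fun c d : ℝ => ¬ ker (dotProductBilin ℝ ℝ (Pi.single j₀ 1 + c • Pi.single j₁ 1))
      ≤ ker (dotProductBilin ℝ ℝ (Pi.single j₀ 1 + d • Pi.single j₁ 1)) := by
  intro c d hcd h
  have := h (x := Pi.single j₀ c - Pi.single j₁ 1) (by simp [hj, hj.symm])
  simp [hj, hj.symm] at this
  exact hcd (by linarith)

def shallowNets (ρ : ℝ → ℝ) (n p : ℕ) : Set ((Fin n → ℝ) → ℝ) :=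
  {f | ∃ (u : Fin p → ℝ) (w : Fin p → Fin n → ℝ), f = fun x => ∑ i, u i * ρ (∑ j, w i j * x j)}

theorem shallowNets_subset_succ (ρ : ℝ → ℝ) (n p : ℕ) :
    shallowNets ρ n p ⊆ shallowNets ρ n (p + 1) := by
  rintro f ⟨u, w, rfl⟩
  refine ⟨Fin.snoc u 0, Fin.snoc w 0, ?_⟩
  simp [Fin.sum_univ_castSucc]

theorem exists_mem_shallowNets_succ_notMem {n : ℕ} (hn : 1 < n) {ρ : ℝ → ℝ} (hρ : Continuous ρ)
    (hpoly : ¬∃ P : ℝ[X], ∀ t, ρ t = P.eval t) (p : ℕ) :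
    ∃ f ∈ shallowNets ρ n (p + 1), f ∉ shallowNets ρ n p := by
  let j₀ : Fin n := ⟨0, by omega⟩
  let j₁ : Fin n := ⟨1, hn⟩
  let w (i : Fin (p + 1)) : Fin n → ℝ := Pi.single j₀ 1 + ((i : ℕ) : ℝ) • Pi.single j₁ 1
  refine ⟨_, ⟨1, w, rfl⟩, ?_⟩
  rintro ⟨v, w', hw'⟩
  have hw : Pairwise fun i k =>
      ¬ ker (dotProductBilin ℝ ℝ (w i)) ≤ ker (dotProductBilin ℝ ℝ (w k)) :=
    (pairwise_not_ker_dotProduct_single_add_le (by simp [j₀, j₁, Fin.ext_iff])).comp_of_injective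
      (Nat.cast_injective.comp Fin.val_injective)
  obtain ⟨i₀, hi₀⟩ := exists_forall_not_ker_le (by simp) hw fun j => dotProductBilin ℝ ℝ (w' j)
  refine hpoly (exists_polynomial_of_sum_ridge_eq_zero (i₀ := .inl i₀)
    (φ := Sum.elim (fun i => dotProductBilin ℝ ℝ (w i)) fun j => dotProductBilin ℝ ℝ (w' j))
    (f := Sum.elim (fun _ => ρ) fun j t => -(v j * ρ t)) (fun x => ?_) ?_ ?_ hρ)
  · simpa [Fintype.sum_sum_type, dotProduct, ← sub_eq_add_neg, sub_eq_zero] using congrFun hw' x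
  · intro h
    simpa [w, j₀, j₁] using LinearMap.congr_fun h (Pi.single j₀ 1)
  · rintro (i | j) hi
    · exact hw (by simpa using hi)
    · exact hi₀ j


open MeasureTheory

theorem stmt13_general (n : ℕ) (hn : 1 < n) (ρ : ℝ → ℝ) (hcont : Continuous ρ)
    (hpoly : ¬∃ P : Polynomial ℝ, ∀ x : ℝ, ρ x = P.eval x) :
    ∀ p : ℕ, 1 ≤ p →
      {f : (Fin n → ℝ) → ℝ | ∃ (u : Fin p → ℝ) (w : Fin p → Fin n → ℝ),
          f = fun x => ∑ i, u i * ρ (∑ j, w i j * x j)}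
        ⊂ {f : (Fin n → ℝ) → ℝ |
            ∃ (u : Fin (p + 1) → ℝ) (w : Fin (p + 1) → Fin n → ℝ),
              f = fun x => ∑ i, u i * ρ (∑ j, w i j * x j)} := fun p _ =>
  (ssubset_iff_of_subset (shallowNets_subset_succ ρ n p)).2
    (exists_mem_shallowNets_succ_notMem hn hcont hpoly p)

/-- For `n > 1` and a continuous, non-polynomial `ρ ∈ L²(ℝ, e^{−x²/2}dx)`,
width-(p+1) networks represent strictly more functions than width-p networks,
for every `p ≥ 1`; hence `dim_*(ρ, n) = ∞`. -/
theorem stmt13 (n : ℕ) (hn : 1 < n) (ρ : ℝ → ℝ) (hcont : Continuous ρ)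
    (hL2 : Integrable (fun x : ℝ => ρ x ^ 2 * Real.exp (-(x ^ 2) / 2)))
    (hpoly : ¬∃ P : Polynomial ℝ, ∀ x : ℝ, ρ x = P.eval x) :
    ∀ p : ℕ, 1 ≤ p →
      {f : (Fin n → ℝ) → ℝ | ∃ (u : Fin p → ℝ) (w : Fin p → Fin n → ℝ),
          f = fun x => ∑ i, u i * ρ (∑ j, w i j * x j)}
        ⊂ {f : (Fin n → ℝ) → ℝ |
            ∃ (u : Fin (p + 1) → ℝ) (w : Fin (p + 1) → Fin n → ℝ),
              f = fun x => ∑ i, u i * ρ (∑ j, w i j * x j)} :=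
  stmt13_general n hn ρ hcont hpoly
end
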